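/- arXiv:1411.7971 — 2 statements merged into one kernel-verified Lean document; each statement's English description precedes it below -/
import Mathlib

section
/- Glueing estimate for the fractional perimeter: Let n ≥ 1, σ ∈ (0,1), let E₁, E₂ ⊆ ℝⁿ be measurable, and set F := (E₁ ∩ B₁) ∪ (E₂ ∖ B₁). Then F ∩ B₁ = E₁ ∩ B₁ and F ∖ B₁ = E₂ ∖ B₁, and Per_σ(F, B_{3/2}) − Per_σ(E₂, B_{3/2}) ≤ Per_σ(E₁, B₁) − Per_σ(E₂, B₁) + L(B₁, (E₁ Δ E₂) ∖ B₁), provided the σ-perimeters involved are finite. -/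
open MeasureTheory
open scoped ENNReal NNReal RealInnerProductSpace

noncomputable section

/-- Interaction functional `L(A,B)` between two sets. -/
def interL (m : ℕ) (σ : ℝ) (A B : Set (EuclideanSpace ℝ (Fin m))) : ℝ≥0∞ :=
  ∫⁻ x in A, ∫⁻ y in B, ENNReal.ofReal (‖x - y‖ ^ (-((m : ℝ) + σ)))

/-- Fractional `σ`-perimeter of `E` in `Ω`. -/
def perS (m : ℕ) (σ : ℝ) (E Ω : Set (EuclideanSpace ℝ (Fin m))) : ℝ≥0∞ :=
  interL m σ (E ∩ Ω) (Eᶜ ∩ Ω) + interL m σ (E ∩ Ω) (Eᶜ ∩ Ωᶜ) + interL m σ (E ∩ Ωᶜ) (Eᶜ ∩ Ω)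

/-- Gagliardo energy over `ℝ²ᵐ ∖ (Ωᶜ × Ωᶜ)`. -/
def gagEnergy (m : ℕ) (s : ℝ) (Ω : Set (EuclideanSpace ℝ (Fin m)))
    (u : EuclideanSpace ℝ (Fin m) → ℝ) : ℝ≥0∞ :=
  ∫⁻ p in {p : EuclideanSpace ℝ (Fin m) × EuclideanSpace ℝ (Fin m) | p.1 ∈ Ω ∨ p.2 ∈ Ω},
    ENNReal.ofReal (|u p.1 - u p.2| ^ 2 / ‖p.1 - p.2‖ ^ ((m : ℝ) + 2 * s))

/-- The energy functional `F(u,E)`. -/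
def funcF (m : ℕ) (s σ : ℝ) (Ω : Set (EuclideanSpace ℝ (Fin m)))
    (u : EuclideanSpace ℝ (Fin m) → ℝ) (E : Set (EuclideanSpace ℝ (Fin m))) : ℝ≥0∞ :=
  gagEnergy m s Ω u + perS m σ E Ω

/-- Membership in the fractional Sobolev space `H^s(ℝᵐ)`. -/
def InHs (m : ℕ) (s : ℝ) (w : EuclideanSpace ℝ (Fin m) → ℝ) : Prop :=
  MemLp w 2 (volume : Measure (EuclideanSpace ℝ (Fin m))) ∧
  (∫⁻ p : EuclideanSpace ℝ (Fin m) × EuclideanSpace ℝ (Fin m),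
    ENNReal.ofReal (|w p.1 - w p.2| ^ 2 / ‖p.1 - p.2‖ ^ ((m : ℝ) + 2 * s))) < ⊤

/-- `(u,E)` is a minimizing pair in `Ω`. -/
def MinimizingPair (m : ℕ) (s σ : ℝ) (Ω : Set (EuclideanSpace ℝ (Fin m)))
    (u : EuclideanSpace ℝ (Fin m) → ℝ) (E : Set (EuclideanSpace ℝ (Fin m))) : Prop :=
  Measurable u ∧ MeasurableSet E ∧
  (∀ᵐ (x : EuclideanSpace ℝ (Fin m)) ∂volume, x ∈ E ∩ Ω → 0 ≤ u x) ∧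
  (∀ᵐ (x : EuclideanSpace ℝ (Fin m)) ∂volume, x ∈ Eᶜ ∩ Ω → u x ≤ 0) ∧
  ∀ (v : EuclideanSpace ℝ (Fin m) → ℝ) (F : Set (EuclideanSpace ℝ (Fin m))),
    Measurable v → MeasurableSet F →
    InHs m s (fun x => v x - u x) →
    (∀ᵐ (x : EuclideanSpace ℝ (Fin m)) ∂volume, x ∈ Ωᶜ → v x = u x) →
    F \ Ω = E \ Ω →
    (∀ᵐ (x : EuclideanSpace ℝ (Fin m)) ∂volume, x ∈ F ∩ Ω → 0 ≤ v x) →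
    (∀ᵐ (x : EuclideanSpace ℝ (Fin m)) ∂volume, x ∈ Fᶜ ∩ Ω → v x ≤ 0) →
    funcF m s σ Ω u E ≤ funcF m s σ Ω v F

/-- Bounded Lipschitz domain: open, bounded, nonempty, and near every boundary point the set
coincides with the supergraph of a Lipschitz function in some unit direction. -/
def IsBoundedLipschitzDomain {m : ℕ} (Ω : Set (EuclideanSpace ℝ (Fin m))) : Prop :=
  IsOpen Ω ∧ Bornology.IsBounded Ω ∧ Ω.Nonempty ∧
  ∀ p ∈ frontier Ω, ∃ r : ℝ, 0 < r ∧ ∃ e : EuclideanSpace ℝ (Fin m), ‖e‖ = 1 ∧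
    ∃ (L : ℝ≥0) (g : EuclideanSpace ℝ (Fin m) → ℝ), LipschitzWith L g ∧
      (∀ (x : EuclideanSpace ℝ (Fin m)) (t : ℝ), g (x + t • e) = g x) ∧
      Ω ∩ Metric.ball p r = {x | g x < (@inner ℝ _ _ x e)} ∩ Metric.ball p r

/-- The set of Hölder quotients of exponent `γ` of `u` on `A`. -/
def holderSet (m : ℕ) (γ : ℝ) (A : Set (EuclideanSpace ℝ (Fin m)))
    (u : EuclideanSpace ℝ (Fin m) → ℝ) : Set ℝ :=
  {c | ∃ x ∈ A, ∃ y ∈ A, x ≠ y ∧ c = |u x - u y| / ‖x - y‖ ^ γ}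

/-- Hölder seminorm `[u]_{C^γ(A)}`. -/
def holderSemi (m : ℕ) (γ : ℝ) (A : Set (EuclideanSpace ℝ (Fin m)))
    (u : EuclideanSpace ℝ (Fin m) → ℝ) : ℝ :=
  sSup (holderSet m γ A u)

/-- Finiteness of the Hölder seminorm `[u]_{C^γ(A)} < ∞`. -/
def HolderFinite (m : ℕ) (γ : ℝ) (A : Set (EuclideanSpace ℝ (Fin m)))
    (u : EuclideanSpace ℝ (Fin m) → ℝ) : Prop :=
  BddAbove (holderSet m γ A u)

/-- A minimizing cone. -/
def MinimizingCone (m : ℕ) (s σ : ℝ) (u : EuclideanSpace ℝ (Fin m) → ℝ)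
    (E : Set (EuclideanSpace ℝ (Fin m))) : Prop :=
  (∀ Ω : Set (EuclideanSpace ℝ (Fin m)), IsBoundedLipschitzDomain Ω →
    MinimizingPair m s σ Ω u E) ∧
  (∀ t : ℝ, 0 < t → ∀ x, u (t • x) = t ^ (s - σ / 2) * u x) ∧
  (∀ t : ℝ, 0 < t → ∀ x, t • x ∈ E ↔ x ∈ E)

/-- Local membership in `H^s`. -/
def InHsLoc (m : ℕ) (s : ℝ) (w : EuclideanSpace ℝ (Fin m) → ℝ) : Prop :=
  ∀ R : ℝ, 0 < R →
    IntegrableOn (fun x => |w x| ^ 2) (Metric.ball (0 : EuclideanSpace ℝ (Fin m)) R) volume ∧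
    (∫⁻ p in (Metric.ball (0 : EuclideanSpace ℝ (Fin m)) R) ×ˢ
        (Metric.ball (0 : EuclideanSpace ℝ (Fin m)) R),
      ENNReal.ofReal (|w p.1 - w p.2| ^ 2 / ‖p.1 - p.2‖ ^ ((m : ℝ) + 2 * s))) < ⊤

/-- `(u,E)` is a minimizing pair in `Ω` with exterior datum `φ` (and exterior set `E₀`). -/
def MinimizingPairDatum (m : ℕ) (s σ : ℝ) (Ω : Set (EuclideanSpace ℝ (Fin m)))
    (φ : EuclideanSpace ℝ (Fin m) → ℝ) (E₀ : Set (EuclideanSpace ℝ (Fin m)))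
    (u : EuclideanSpace ℝ (Fin m) → ℝ) (E : Set (EuclideanSpace ℝ (Fin m))) : Prop :=
  Measurable u ∧ MeasurableSet E ∧
  InHs m s (fun x => u x - φ x) ∧
  (∀ᵐ (x : EuclideanSpace ℝ (Fin m)) ∂volume, x ∈ Ωᶜ → u x = φ x) ∧
  E \ Ω = E₀ \ Ω ∧
  (∀ᵐ (x : EuclideanSpace ℝ (Fin m)) ∂volume, x ∈ E ∩ Ω → 0 ≤ u x) ∧
  (∀ᵐ (x : EuclideanSpace ℝ (Fin m)) ∂volume, x ∈ Eᶜ ∩ Ω → u x ≤ 0) ∧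
  ∀ (v : EuclideanSpace ℝ (Fin m) → ℝ) (F : Set (EuclideanSpace ℝ (Fin m))),
    Measurable v → MeasurableSet F →
    InHs m s (fun x => v x - φ x) →
    (∀ᵐ (x : EuclideanSpace ℝ (Fin m)) ∂volume, x ∈ Ωᶜ → v x = φ x) →
    F \ Ω = E₀ \ Ω →
    (∀ᵐ (x : EuclideanSpace ℝ (Fin m)) ∂volume, x ∈ F ∩ Ω → 0 ≤ v x) →
    (∀ᵐ (x : EuclideanSpace ℝ (Fin m)) ∂volume, x ∈ Fᶜ ∩ Ω → v x ≤ 0) →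
    funcF m s σ Ω u E ≤ funcF m s σ Ω v F

/-! Extension to the upper half space, modeled on `EuclideanSpace ℝ (Fin (n+1))`. -/

/-- Last (vertical) coordinate `z`. -/
def lastc {n : ℕ} (X : EuclideanSpace ℝ (Fin (n + 1))) : ℝ := X (Fin.last n)

/-- Horizontal part `x ∈ ℝⁿ` of a point of `ℝ^{n+1}`. -/
def xpart {n : ℕ} (X : EuclideanSpace ℝ (Fin (n + 1))) : EuclideanSpace ℝ (Fin n) :=
  (WithLp.equiv 2 (Fin n → ℝ)).symm (fun i => X i.castSucc)

/-- Embedding `(x, t) ↦ X ∈ ℝ^{n+1}`. -/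
def emb {n : ℕ} (x : EuclideanSpace ℝ (Fin n)) (t : ℝ) : EuclideanSpace ℝ (Fin (n + 1)) :=
  (WithLp.equiv 2 (Fin (n + 1) → ℝ)).symm (Fin.snoc (fun i => x i) t)

/-- Open upper half-space `ℝ^{n+1}_+`. -/
def upperHalf (n : ℕ) : Set (EuclideanSpace ℝ (Fin (n + 1))) := {X | 0 < lastc X}

/-- Upper half-ball `𝔅_r⁺`. -/
def upHalfBall (n : ℕ) (r : ℝ) : Set (EuclideanSpace ℝ (Fin (n + 1))) :=
  {X | ‖X‖ < r ∧ 0 < lastc X}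

/-- Upper half-sphere `∂𝔅_r⁺` (spherical part of the boundary). -/
def upHalfSphere (n : ℕ) (r : ℝ) : Set (EuclideanSpace ℝ (Fin (n + 1))) :=
  {X | ‖X‖ = r ∧ 0 < lastc X}

/-- Unnormalized Poisson-type kernel `t^a (|x|² + t²)^{-(n+a)/2}`. -/
def Pker (n : ℕ) (a : ℝ) (x : EuclideanSpace ℝ (Fin n)) (t : ℝ) : ℝ :=
  t ^ a * (‖x‖ ^ 2 + t ^ 2) ^ (-(((n : ℝ) + a) / 2))

/-- Normalizing constant for the Poisson-type kernel. -/
def PkerConst (n : ℕ) (a : ℝ) : ℝ := (∫ x : EuclideanSpace ℝ (Fin n), Pker n a x 1)⁻¹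

/-- Poisson-type extension of a function `u : ℝⁿ → ℝ` to `ℝ^{n+1}_+`. -/
def poissonExt (n : ℕ) (a : ℝ) (u : EuclideanSpace ℝ (Fin n) → ℝ)
    (X : EuclideanSpace ℝ (Fin (n + 1))) : ℝ :=
  ∫ y : EuclideanSpace ℝ (Fin n), PkerConst n a * Pker n a (xpart X - y) (lastc X) * u y

/-- The `s`-Poisson extension `ū` of `u`. -/
def extB (n : ℕ) (s : ℝ) (u : EuclideanSpace ℝ (Fin n) → ℝ) :
    EuclideanSpace ℝ (Fin (n + 1)) → ℝ :=
  poissonExt n (2 * s) u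

/-- `χ_E - χ_{Eᶜ}`. -/
def signInd {n : ℕ} (E : Set (EuclideanSpace ℝ (Fin n))) (x : EuclideanSpace ℝ (Fin n)) : ℝ :=
  Set.indicator E (fun _ => (1 : ℝ)) x - Set.indicator Eᶜ (fun _ => (1 : ℝ)) x

/-- The `σ`-extension `U` of a set `E`. -/
def extU (n : ℕ) (σ : ℝ) (E : Set (EuclideanSpace ℝ (Fin n))) :
    EuclideanSpace ℝ (Fin (n + 1)) → ℝ :=
  poissonExt n σ (signInd E)

/-- Weighted Dirichlet energy `∫_S z^a |∇v|²` (with values in `ℝ≥0∞`). -/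
def wDirichlet (n : ℕ) (a : ℝ) (S : Set (EuclideanSpace ℝ (Fin (n + 1))))
    (v : EuclideanSpace ℝ (Fin (n + 1)) → ℝ) : ℝ≥0∞ :=
  ∫⁻ X in S, ENNReal.ofReal (lastc X ^ a * ‖fderiv ℝ v X‖ ^ 2)

/-- Weighted Dirichlet energy `∫_S z^a |∇v|²` (real-valued). -/
def wDirichletR (n : ℕ) (a : ℝ) (S : Set (EuclideanSpace ℝ (Fin (n + 1))))
    (v : EuclideanSpace ℝ (Fin (n + 1)) → ℝ) : ℝ :=
  ∫ X in S, lastc X ^ a * ‖fderiv ℝ v X‖ ^ 2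

/-- `(ū, U)` is a minimizing pair for the extended problem in the domain `Ω ⊆ ℝ^{n+1}`. -/
def ExtMinimizingIn (n : ℕ) (s σ c : ℝ) (Ω : Set (EuclideanSpace ℝ (Fin (n + 1))))
    (ub U : EuclideanSpace ℝ (Fin (n + 1)) → ℝ) : Prop :=
  ∀ (vb V : EuclideanSpace ℝ (Fin (n + 1)) → ℝ) (F : Set (EuclideanSpace ℝ (Fin n))),
    (∃ N, IsOpen N ∧ frontier Ω ⊆ N ∧ Set.EqOn V U N) →
    (∀ᵐ (x : EuclideanSpace ℝ (Fin n)) ∂volume, V (emb x 0) = signInd F x) →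
    (∃ N, IsOpen N ∧ frontier Ω ⊆ N ∧ Set.EqOn vb ub N) →
    (∀ᵐ (x : EuclideanSpace ℝ (Fin n)) ∂volume, x ∈ F → 0 ≤ vb (emb x 0)) →
    (∀ᵐ (x : EuclideanSpace ℝ (Fin n)) ∂volume, x ∈ Fᶜ → vb (emb x 0) ≤ 0) →
    wDirichlet n (1 - 2 * s) (Ω ∩ upperHalf n) ub
        + ENNReal.ofReal c * wDirichlet n (1 - σ) (Ω ∩ upperHalf n) U ≤
      wDirichlet n (1 - 2 * s) (Ω ∩ upperHalf n) vb
        + ENNReal.ofReal c * wDirichlet n (1 - σ) (Ω ∩ upperHalf n) V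

/-- The rescaled energy `G_u(r)` appearing in the Weiss monotonicity formula. -/
def weissG (n : ℕ) (s σ c : ℝ) (u : EuclideanSpace ℝ (Fin n) → ℝ)
    (E : Set (EuclideanSpace ℝ (Fin n))) (r : ℝ) : ℝ :=
  r ^ (σ - (n : ℝ)) *
    (wDirichletR n (1 - 2 * s) (upHalfBall n r) (extB n s u)
      + c * wDirichletR n (1 - σ) (upHalfBall n r) (extU n σ E))

/-- The Weiss monotonicity quantity `Φ_u(r)`. -/
def weissPhi (n : ℕ) (s σ c : ℝ) (u : EuclideanSpace ℝ (Fin n) → ℝ)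
    (E : Set (EuclideanSpace ℝ (Fin n))) (r : ℝ) : ℝ :=
  weissG n s σ c u E r -
    (s - σ / 2) * r ^ (σ - (n : ℝ) - 1) *
      ∫ X in upHalfSphere n r, lastc X ^ (1 - 2 * s) * (extB n s u X) ^ 2
        ∂(MeasureTheory.Measure.hausdorffMeasure (n : ℝ))

/-- The fractional Laplacian (via second differences), with normalizing constant `C`. -/
def fracLap (m : ℕ) (s C : ℝ) (v : EuclideanSpace ℝ (Fin m) → ℝ)
    (x : EuclideanSpace ℝ (Fin m)) : ℝ :=
  -(C / 2) * ∫ y : EuclideanSpace ℝ (Fin m),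
    (v (x + y) + v (x - y) - 2 * v x) / ‖y‖ ^ ((m : ℝ) + 2 * s)

/-- `(-Δ)^s u = 0` in `O` in the weak (distributional) sense. -/
def WeakSHarmonic (m : ℕ) (s : ℝ) (u : EuclideanSpace ℝ (Fin m) → ℝ)
    (O : Set (EuclideanSpace ℝ (Fin m))) : Prop :=
  ∀ η : EuclideanSpace ℝ (Fin m) → ℝ, ContDiff ℝ (⊤ : ℕ∞) η → HasCompactSupport η → tsupport η ⊆ O →
    (∫ p : EuclideanSpace ℝ (Fin m) × EuclideanSpace ℝ (Fin m),
      (u p.1 - u p.2) * (η p.1 - η p.2) / ‖p.1 - p.2‖ ^ ((m : ℝ) + 2 * s)) = 0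

/-- The unit vector `(cos θ, sin θ)` in the plane. -/
def unitVec2 (θ : ℝ) : EuclideanSpace ℝ (Fin 2) :=
  (WithLp.equiv 2 (Fin 2 → ℝ)).symm ![Real.cos θ, Real.sin θ]

/-- Closed conical sector in the plane with vertex at the origin, spanned by angles in `[a,b]`. -/
def ClosedSector (a b : ℝ) : Set (EuclideanSpace ℝ (Fin 2)) :=
  {x | ∃ r θ : ℝ, 0 ≤ r ∧ θ ∈ Set.Icc a b ∧ x = r • unitVec2 θ}


namespace GlueAux

/-- The interaction kernel as a function on the product space. -/
def Kk (m : ℕ) (σ : ℝ) (p : EuclideanSpace ℝ (Fin m) × EuclideanSpace ℝ (Fin m)) : ℝ≥0∞ :=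
  ENNReal.ofReal (‖p.1 - p.2‖ ^ (-((m : ℝ) + σ)))

lemma measurable_Kk (m : ℕ) (σ : ℝ) : Measurable (Kk m σ) :=
  ENNReal.measurable_ofReal.comp
    (((continuous_fst.sub continuous_snd).norm.measurable).pow measurable_const)

lemma interL_eq (m : ℕ) (σ : ℝ) (A B : Set (EuclideanSpace ℝ (Fin m))) :
    interL m σ A B
      = ∫⁻ p, Kk m σ p
          ∂(((volume : Measure (EuclideanSpace ℝ (Fin m))).restrict A).prod (volume.restrict B)) :=
  lintegral_lintegral ((measurable_Kk m σ).aemeasurable)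

lemma interL_eq' (m : ℕ) (σ : ℝ) (A B : Set (EuclideanSpace ℝ (Fin m))) :
    interL m σ A B
      = ∫⁻ p in A ×ˢ B, Kk m σ p
          ∂((volume : Measure (EuclideanSpace ℝ (Fin m))).prod volume) := by
  rw [interL_eq, Measure.prod_restrict]

lemma interL_mono {m : ℕ} {σ : ℝ} {A A' B B' : Set (EuclideanSpace ℝ (Fin m))}
    (hA : A ⊆ A') (hB : B ⊆ B') : interL m σ A B ≤ interL m σ A' B' := by
  rw [interL_eq', interL_eq']
  exact lintegral_mono_set (Set.prod_mono hA hB)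

lemma interL_union_right_le (m : ℕ) (σ : ℝ) (A X Y : Set (EuclideanSpace ℝ (Fin m))) :
    interL m σ A (X ∪ Y) ≤ interL m σ A X + interL m σ A Y := by
  rw [interL_eq', interL_eq', interL_eq', Set.prod_union]
  exact lintegral_union_le _ _ _

lemma interL_union_left_le (m : ℕ) (σ : ℝ) (X Y B : Set (EuclideanSpace ℝ (Fin m))) :
    interL m σ (X ∪ Y) B ≤ interL m σ X B + interL m σ Y B := by
  rw [interL_eq', interL_eq', interL_eq', Set.union_prod]
  exact lintegral_union_le _ _ _

lemma interL_union_right {m : ℕ} {σ : ℝ} {A X Y : Set (EuclideanSpace ℝ (Fin m))}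
    (hA : MeasurableSet A) (hY : MeasurableSet Y) (hXY : Disjoint X Y) :
    interL m σ A (X ∪ Y) = interL m σ A X + interL m σ A Y := by
  rw [interL_eq', interL_eq', interL_eq', Set.prod_union]
  refine lintegral_union (hA.prod hY) ?_
  exact Set.disjoint_left.mpr fun p hp hp' => Set.disjoint_left.mp hXY hp.2 hp'.2

lemma interL_union_left {m : ℕ} {σ : ℝ} {X Y B : Set (EuclideanSpace ℝ (Fin m))}
    (hY : MeasurableSet Y) (hB : MeasurableSet B) (hXY : Disjoint X Y) :
    interL m σ (X ∪ Y) B = interL m σ X B + interL m σ Y B := by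
  rw [interL_eq', interL_eq', interL_eq', Set.union_prod]
  refine lintegral_union (hY.prod hB) ?_
  exact Set.disjoint_left.mpr fun p hp hp' => Set.disjoint_left.mp hXY hp.1 hp'.1

lemma interL_symm (m : ℕ) (σ : ℝ) (A B : Set (EuclideanSpace ℝ (Fin m))) :
    interL m σ A B = interL m σ B A := by
  rw [interL_eq, interL_eq, ← lintegral_prod_swap (Kk m σ)]
  refine lintegral_congr fun z => ?_
  simp [Kk, norm_sub_rev]

lemma perS_def (m : ℕ) (σ : ℝ) (E Ω : Set (EuclideanSpace ℝ (Fin m))) :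
    perS m σ E Ω = interL m σ (E ∩ Ω) (Eᶜ ∩ Ω) + interL m σ (E ∩ Ω) (Eᶜ ∩ Ωᶜ)
      + interL m σ (E ∩ Ωᶜ) (Eᶜ ∩ Ω) := rfl

lemma perS_split {m : ℕ} {σ : ℝ} {E B Ω : Set (EuclideanSpace ℝ (Fin m))}
    (hE : MeasurableSet E) (hB : MeasurableSet B) (hΩ : MeasurableSet Ω) (hBΩ : B ⊆ Ω) :
    perS m σ E Ω = perS m σ E B
      + interL m σ (E ∩ (Ω \ B)) (Eᶜ ∩ (Ω \ B))
      + interL m σ (E ∩ (Ω \ B)) (Eᶜ ∩ Ωᶜ)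
      + interL m σ (E ∩ Ωᶜ) (Eᶜ ∩ (Ω \ B)) := by
  have hBA : Disjoint B (Ω \ B) := Set.disjoint_sdiff_right
  have hunion : B ∪ (Ω \ B) = Ω := Set.union_diff_cancel hBΩ
  have hBc : Bᶜ = (Ω \ B) ∪ Ωᶜ := by
    ext x
    simp only [Set.mem_compl_iff, Set.mem_union, Set.mem_diff]
    constructor
    · intro hx
      by_cases hΩx : x ∈ Ω
      · exact Or.inl ⟨hΩx, hx⟩
      · exact Or.inr hΩx
    · rintro (⟨_, hx⟩ | hx)
      · exact hx
      · exact fun hxB => hx (hBΩ hxB)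
  have hd1 : Disjoint (E ∩ B) (E ∩ (Ω \ B)) :=
    hBA.mono Set.inter_subset_right Set.inter_subset_right
  have hd2 : Disjoint (Eᶜ ∩ B) (Eᶜ ∩ (Ω \ B)) :=
    hBA.mono Set.inter_subset_right Set.inter_subset_right
  have hdAO : Disjoint (Ω \ B) Ωᶜ :=
    Disjoint.mono_left Set.diff_subset disjoint_compl_right
  have hd3 : Disjoint (E ∩ (Ω \ B)) (E ∩ Ωᶜ) :=
    hdAO.mono Set.inter_subset_right Set.inter_subset_right
  have hd4 : Disjoint (Eᶜ ∩ (Ω \ B)) (Eᶜ ∩ Ωᶜ) :=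
    hdAO.mono Set.inter_subset_right Set.inter_subset_right
  have hEΩ : E ∩ Ω = (E ∩ B) ∪ (E ∩ (Ω \ B)) := by
    rw [← Set.inter_union_distrib_left, hunion]
  have hEcΩ : Eᶜ ∩ Ω = (Eᶜ ∩ B) ∪ (Eᶜ ∩ (Ω \ B)) := by
    rw [← Set.inter_union_distrib_left, hunion]
  have hEBc : E ∩ Bᶜ = (E ∩ (Ω \ B)) ∪ (E ∩ Ωᶜ) := by
    rw [hBc, Set.inter_union_distrib_left]
  have hEcBc : Eᶜ ∩ Bᶜ = (Eᶜ ∩ (Ω \ B)) ∪ (Eᶜ ∩ Ωᶜ) := by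
    rw [hBc, Set.inter_union_distrib_left]
  have hmA : MeasurableSet (Ω \ B) := hΩ.diff hB
  rw [perS_def m σ E Ω, perS_def m σ E B, hEΩ, hEcΩ, hEBc, hEcBc]
  rw [interL_union_left (hE.inter hmA) ((hE.compl.inter hB).union (hE.compl.inter hmA)) hd1,
      interL_union_right (hE.inter hB) (hE.compl.inter hmA) hd2,
      interL_union_right (hE.inter hmA) (hE.compl.inter hmA) hd2,
      interL_union_left (hE.inter hmA) (hE.compl.inter hΩ.compl) hd1,
      interL_union_right (hE.inter hΩ.compl) (hE.compl.inter hmA) hd2,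
      interL_union_right (hE.inter hB) (hE.compl.inter hΩ.compl) hd4,
      interL_union_left (hE.inter hΩ.compl) (hE.compl.inter hB) hd3]
  ring

end GlueAux

open GlueAux

/-- **Glueing estimate for the fractional perimeter.** -/
theorem glueing_perimeter_estimate (n : ℕ) (hn : 1 ≤ n) (σ : ℝ)
    (hσ : σ ∈ Set.Ioo (0 : ℝ) 1)
    (E₁ E₂ : Set (EuclideanSpace ℝ (Fin n))) (h₁ : MeasurableSet E₁) (h₂ : MeasurableSet E₂)
    (hfin1 : perS n σ E₁ (Metric.ball 0 1) < ⊤)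
    (hfin2 : perS n σ E₂ (Metric.ball 0 (3 / 2)) < ⊤) :
    ((E₁ ∩ Metric.ball 0 1) ∪ (E₂ \ Metric.ball 0 1)) ∩ Metric.ball 0 1
        = E₁ ∩ Metric.ball (0 : EuclideanSpace ℝ (Fin n)) 1 ∧
    ((E₁ ∩ Metric.ball 0 1) ∪ (E₂ \ Metric.ball 0 1)) \ Metric.ball 0 1
        = E₂ \ Metric.ball (0 : EuclideanSpace ℝ (Fin n)) 1 ∧
    perS n σ ((E₁ ∩ Metric.ball 0 1) ∪ (E₂ \ Metric.ball 0 1)) (Metric.ball 0 (3 / 2))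
        + perS n σ E₂ (Metric.ball 0 1)
      ≤ perS n σ E₂ (Metric.ball 0 (3 / 2)) + perS n σ E₁ (Metric.ball 0 1)
        + interL n σ (Metric.ball 0 1) (((E₁ \ E₂) ∪ (E₂ \ E₁)) \ Metric.ball 0 1) := by
  classical
  set B : Set (EuclideanSpace ℝ (Fin n)) := Metric.ball 0 1 with hBdef
  set Ω : Set (EuclideanSpace ℝ (Fin n)) := Metric.ball 0 (3 / 2) with hΩdef
  set F : Set (EuclideanSpace ℝ (Fin n)) := (E₁ ∩ B) ∪ (E₂ \ B) with hFdef
  have hBΩ : B ⊆ Ω := Metric.ball_subset_ball (by norm_num)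
  have hmB : MeasurableSet B := measurableSet_ball
  have hmΩ : MeasurableSet Ω := measurableSet_ball
  have hmF : MeasurableSet F := (h₁.inter hmB).union (h₂.diff hmB)
  -- Membership description of `F`
  have hmemF : ∀ x, x ∈ F ↔ (x ∈ E₁ ∧ x ∈ B) ∨ (x ∈ E₂ ∧ x ∉ B) := by
    intro x
    simp only [hFdef, Set.mem_union, Set.mem_inter_iff, Set.mem_diff]
  -- `F` agrees with `E₂` outside `B`
  have key : ∀ X : Set (EuclideanSpace ℝ (Fin n)), X ⊆ Bᶜ → F ∩ X = E₂ ∩ X := by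
    intro X hX
    ext x
    simp only [Set.mem_inter_iff, hmemF x]
    constructor
    · rintro ⟨(⟨_, hB'⟩ | ⟨h2, _⟩), hx⟩
      · exact absurd hB' (hX hx)
      · exact ⟨h2, hx⟩
    · rintro ⟨h2, hx⟩
      exact ⟨Or.inr ⟨h2, hX hx⟩, hx⟩
  have keyc : ∀ X : Set (EuclideanSpace ℝ (Fin n)), X ⊆ Bᶜ → Fᶜ ∩ X = E₂ᶜ ∩ X := by
    intro X hX
    ext x
    simp only [Set.mem_inter_iff, Set.mem_compl_iff, hmemF x]
    constructor
    · rintro ⟨hFc, hx⟩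
      exact ⟨fun h2 => hFc (Or.inr ⟨h2, hX hx⟩), hx⟩
    · rintro ⟨h2, hx⟩
      refine ⟨fun hF => ?_, hx⟩
      rcases hF with ⟨_, hB'⟩ | ⟨h2', _⟩
      · exact hX hx hB'
      · exact h2 h2'
  -- `F` agrees with `E₁` inside `B`
  have conj1 : F ∩ B = E₁ ∩ B := by
    ext x
    simp only [Set.mem_inter_iff, hmemF x]
    constructor
    · rintro ⟨(⟨h1, _⟩ | ⟨_, hB'⟩), hx⟩
      · exact ⟨h1, hx⟩
      · exact absurd hx hB'
    · rintro ⟨h1, hx⟩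
      exact ⟨Or.inl ⟨h1, hx⟩, hx⟩
  have conj1c : Fᶜ ∩ B = E₁ᶜ ∩ B := by
    ext x
    simp only [Set.mem_inter_iff, Set.mem_compl_iff, hmemF x]
    constructor
    · rintro ⟨hFc, hx⟩
      exact ⟨fun h1 => hFc (Or.inl ⟨h1, hx⟩), hx⟩
    · rintro ⟨h1, hx⟩
      refine ⟨fun hF => ?_, hx⟩
      rcases hF with ⟨h1', _⟩ | ⟨_, hB'⟩
      · exact h1 h1'
      · exact hB' hx
  have conj2 : F \ B = E₂ \ B := by
    have := key Bᶜ subset_rfl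
    simpa [Set.diff_eq] using this
  refine ⟨conj1, conj2, ?_⟩
  -- Splitting lemmas
  have hAsub : Ω \ B ⊆ Bᶜ := fun x hx => hx.2
  have hOsub : Ωᶜ ⊆ Bᶜ := Set.compl_subset_compl.mpr hBΩ
  have hsplitF : perS n σ F Ω = perS n σ F B
      + (interL n σ (E₂ ∩ (Ω \ B)) (E₂ᶜ ∩ (Ω \ B))
        + interL n σ (E₂ ∩ (Ω \ B)) (E₂ᶜ ∩ Ωᶜ)
        + interL n σ (E₂ ∩ Ωᶜ) (E₂ᶜ ∩ (Ω \ B))) := by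
    rw [perS_split hmF hmB hmΩ hBΩ, key _ hAsub, keyc _ hAsub, key _ hOsub, keyc _ hOsub]
    ring
  have hsplit2 : perS n σ E₂ Ω = perS n σ E₂ B
      + (interL n σ (E₂ ∩ (Ω \ B)) (E₂ᶜ ∩ (Ω \ B))
        + interL n σ (E₂ ∩ (Ω \ B)) (E₂ᶜ ∩ Ωᶜ)
        + interL n σ (E₂ ∩ Ωᶜ) (E₂ᶜ ∩ (Ω \ B))) := by
    rw [perS_split h₂ hmB hmΩ hBΩ]
    ring
  -- The key comparison inside `B`
  have hFBc : F ∩ Bᶜ = E₂ ∩ Bᶜ := key Bᶜ subset_rfl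
  have hFcBc : Fᶜ ∩ Bᶜ = E₂ᶜ ∩ Bᶜ := keyc Bᶜ subset_rfl
  have step2 : interL n σ (E₁ ∩ B) (E₂ᶜ ∩ Bᶜ)
      ≤ interL n σ (E₁ ∩ B) (E₁ᶜ ∩ Bᶜ) + interL n σ B ((E₁ \ E₂) ∩ Bᶜ) := by
    calc interL n σ (E₁ ∩ B) (E₂ᶜ ∩ Bᶜ)
        ≤ interL n σ (E₁ ∩ B) ((E₁ᶜ ∩ Bᶜ) ∪ ((E₁ \ E₂) ∩ Bᶜ)) := by
          refine interL_mono subset_rfl ?_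
          rintro x ⟨h2, hb⟩
          by_cases h1 : x ∈ E₁
          · exact Or.inr ⟨⟨h1, h2⟩, hb⟩
          · exact Or.inl ⟨h1, hb⟩
      _ ≤ interL n σ (E₁ ∩ B) (E₁ᶜ ∩ Bᶜ) + interL n σ (E₁ ∩ B) ((E₁ \ E₂) ∩ Bᶜ) :=
          interL_union_right_le n σ _ _ _
      _ ≤ interL n σ (E₁ ∩ B) (E₁ᶜ ∩ Bᶜ) + interL n σ B ((E₁ \ E₂) ∩ Bᶜ) :=
          add_le_add_right (interL_mono Set.inter_subset_right subset_rfl) _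
  have step3 : interL n σ (E₂ ∩ Bᶜ) (E₁ᶜ ∩ B)
      ≤ interL n σ (E₁ ∩ Bᶜ) (E₁ᶜ ∩ B) + interL n σ B ((E₂ \ E₁) ∩ Bᶜ) := by
    calc interL n σ (E₂ ∩ Bᶜ) (E₁ᶜ ∩ B)
        ≤ interL n σ ((E₁ ∩ Bᶜ) ∪ ((E₂ \ E₁) ∩ Bᶜ)) (E₁ᶜ ∩ B) := by
          refine interL_mono ?_ subset_rfl
          rintro x ⟨h2, hb⟩
          by_cases h1 : x ∈ E₁
          · exact Or.inl ⟨h1, hb⟩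
          · exact Or.inr ⟨⟨h2, h1⟩, hb⟩
      _ ≤ interL n σ (E₁ ∩ Bᶜ) (E₁ᶜ ∩ B) + interL n σ ((E₂ \ E₁) ∩ Bᶜ) (E₁ᶜ ∩ B) :=
          interL_union_left_le n σ _ _ _
      _ ≤ interL n σ (E₁ ∩ Bᶜ) (E₁ᶜ ∩ B) + interL n σ B ((E₂ \ E₁) ∩ Bᶜ) := by
          refine add_le_add_right ?_ _
          rw [interL_symm]
          exact interL_mono Set.inter_subset_right subset_rfl
  have hSsum : interL n σ B ((E₁ \ E₂) ∩ Bᶜ) + interL n σ B ((E₂ \ E₁) ∩ Bᶜ)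
      = interL n σ B (((E₁ \ E₂) ∪ (E₂ \ E₁)) \ B) := by
    have hset : ((E₁ \ E₂) ∪ (E₂ \ E₁)) \ B = ((E₁ \ E₂) ∩ Bᶜ) ∪ ((E₂ \ E₁) ∩ Bᶜ) := by
      ext x
      simp only [Set.mem_diff, Set.mem_union, Set.mem_inter_iff, Set.mem_compl_iff]
      tauto
    have hdisj : Disjoint ((E₁ \ E₂) ∩ Bᶜ) ((E₂ \ E₁) ∩ Bᶜ) :=
      Set.disjoint_left.mpr fun x hx hx' => hx.1.2 hx'.1.1
    rw [hset, interL_union_right hmB (((h₂.diff h₁)).inter hmB.compl) hdisj]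
  have keyIneq : perS n σ F B
      ≤ perS n σ E₁ B + interL n σ B (((E₁ \ E₂) ∪ (E₂ \ E₁)) \ B) := by
    rw [perS_def n σ F B, perS_def n σ E₁ B, conj1, conj1c, hFBc, hFcBc]
    calc interL n σ (E₁ ∩ B) (E₁ᶜ ∩ B) + interL n σ (E₁ ∩ B) (E₂ᶜ ∩ Bᶜ)
          + interL n σ (E₂ ∩ Bᶜ) (E₁ᶜ ∩ B)
        ≤ interL n σ (E₁ ∩ B) (E₁ᶜ ∩ B)
            + (interL n σ (E₁ ∩ B) (E₁ᶜ ∩ Bᶜ) + interL n σ B ((E₁ \ E₂) ∩ Bᶜ))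
            + (interL n σ (E₁ ∩ Bᶜ) (E₁ᶜ ∩ B) + interL n σ B ((E₂ \ E₁) ∩ Bᶜ)) :=
          add_le_add (add_le_add le_rfl step2) step3
      _ = (interL n σ (E₁ ∩ B) (E₁ᶜ ∩ B) + interL n σ (E₁ ∩ B) (E₁ᶜ ∩ Bᶜ)
            + interL n σ (E₁ ∩ Bᶜ) (E₁ᶜ ∩ B))
            + (interL n σ B ((E₁ \ E₂) ∩ Bᶜ) + interL n σ B ((E₂ \ E₁) ∩ Bᶜ)) := by
          ring
      _ = interL n σ (E₁ ∩ B) (E₁ᶜ ∩ B) + interL n σ (E₁ ∩ B) (E₁ᶜ ∩ Bᶜ)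
            + interL n σ (E₁ ∩ Bᶜ) (E₁ᶜ ∩ B)
            + interL n σ B (((E₁ \ E₂) ∪ (E₂ \ E₁)) \ B) := by
          rw [hSsum]
  -- Conclusion
  rw [hsplitF, hsplit2]
  set T := interL n σ (E₂ ∩ (Ω \ B)) (E₂ᶜ ∩ (Ω \ B))
    + interL n σ (E₂ ∩ (Ω \ B)) (E₂ᶜ ∩ Ωᶜ)
    + interL n σ (E₂ ∩ Ωᶜ) (E₂ᶜ ∩ (Ω \ B)) with hT
  calc perS n σ F B + T + perS n σ E₂ B
      = perS n σ F B + (T + perS n σ E₂ B) := by ring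
    _ ≤ (perS n σ E₁ B + interL n σ B (((E₁ \ E₂) ∪ (E₂ \ E₁)) \ B))
          + (T + perS n σ E₂ B) := add_le_add_left keyIneq _
    _ = perS n σ E₂ B + T + perS n σ E₁ B
          + interL n σ B (((E₁ \ E₂) ∪ (E₂ \ E₁)) \ B) := by ring

end
end

section
/- Kernel cutoff estimate: Let n ≥ 1, s ∈ (0,1), η ∈ C_c^∞(B₁), and let u: ℝⁿ → ℝ be measurable. Then ∫∫_{ℝ²ⁿ∖(B₁ᶜ×B₁ᶜ)} |u(y)|² |η(x)−η(y)|² / |x−y|^{n+2s} dx dy ≤ C ∫_{ℝⁿ} |u(y)|²/(1+|y|^{n+2s}) dy, where C > 0 depends only on the C¹ norm of η, on n, and on s. -/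
open MeasureTheory
open scoped ENNReal NNReal RealInnerProductSpace

noncomputable section

section KernelCutoffAux

open Metric Set


variable {n : ℕ}

private lemma finite_ball_rpow (hn : 1 ≤ n) {q : ℝ} (hq : q < n) :
    (∫⁻ x : EuclideanSpace ℝ (Fin n) in ball 0 1, ENNReal.ofReal (‖x‖ ^ (-q))) < ⊤ := by
  rcases le_or_gt q 0 with hq0 | hq0
  · calc (∫⁻ x : EuclideanSpace ℝ (Fin n) in ball 0 1, ENNReal.ofReal (‖x‖ ^ (-q)))
        ≤ ∫⁻ _x : EuclideanSpace ℝ (Fin n) in ball 0 1, 1 := by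
          refine setLIntegral_mono' measurableSet_ball fun x hx => ?_
          rw [mem_ball_zero_iff] at hx
          refine ENNReal.ofReal_le_of_le_toReal ?_
          simp only [ENNReal.toReal_one]
          exact Real.rpow_le_one (norm_nonneg _) hx.le (by linarith)
      _ < ⊤ := by
          rw [setLIntegral_one]
          exact measure_ball_lt_top
  · have hmeas : Measurable fun x : EuclideanSpace ℝ (Fin n) => ‖x‖ ^ (-q) := by fun_prop
    rw [lintegral_eq_lintegral_meas_le _
      (Filter.Eventually.of_forall fun x => Real.rpow_nonneg (norm_nonneg _) _)
      hmeas.aemeasurable]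
    have hsub : ∀ t : ℝ, 0 < t →
        {a : EuclideanSpace ℝ (Fin n) | t ≤ ‖a‖ ^ (-q)} ⊆ closedBall 0 (t ^ (-q)⁻¹) := by
      intro t ht a ha
      simp only [mem_setOf_eq] at ha
      rcases eq_or_ne a 0 with rfl | ha0
      · rw [norm_zero, Real.zero_rpow (by linarith : -q ≠ 0)] at ha
        linarith
      · have hna : 0 < ‖a‖ := norm_pos_iff.2 ha0
        rw [mem_closedBall_zero_iff]
        exact (Real.le_rpow_inv_iff_of_neg hna ht (by linarith : -q < 0)).2 ha
    calc (∫⁻ t in Set.Ioi (0:ℝ),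
          (volume.restrict (ball (0:EuclideanSpace ℝ (Fin n)) 1))
            {a | t ≤ ‖a‖ ^ (-q)})
        ≤ (∫⁻ t in Set.Ioc (0:ℝ) 1,
            (volume.restrict (ball (0:EuclideanSpace ℝ (Fin n)) 1)) {a | t ≤ ‖a‖ ^ (-q)})
          + ∫⁻ t in Set.Ioi (1:ℝ),
            (volume.restrict (ball (0:EuclideanSpace ℝ (Fin n)) 1)) {a | t ≤ ‖a‖ ^ (-q)} := by
          refine le_trans (lintegral_mono_set (Ioi_subset_Ioc_union_Ioi (b:=1))) ?_
          exact lintegral_union_le _ _ _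
      _ < ⊤ := by
          refine ENNReal.add_lt_top.2 ⟨?_, ?_⟩
          · calc (∫⁻ t in Set.Ioc (0:ℝ) 1,
                (volume.restrict (ball (0:EuclideanSpace ℝ (Fin n)) 1)) {a | t ≤ ‖a‖ ^ (-q)})
                ≤ ∫⁻ _t in Set.Ioc (0:ℝ) 1, volume (ball (0:EuclideanSpace ℝ (Fin n)) 1) := by
                  refine setLIntegral_mono' measurableSet_Ioc fun t _ => ?_
                  calc (volume.restrict (ball (0:EuclideanSpace ℝ (Fin n)) 1)) {a | t ≤ ‖a‖ ^ (-q)}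
                      ≤ (volume.restrict (ball (0:EuclideanSpace ℝ (Fin n)) 1)) univ :=
                        measure_mono (subset_univ _)
                    _ = volume (ball (0:EuclideanSpace ℝ (Fin n)) 1) :=
                        Measure.restrict_apply_univ _
              _ < ⊤ := by
                  rw [setLIntegral_const]
                  exact ENNReal.mul_lt_top measure_ball_lt_top (by simp)
          · calc (∫⁻ t in Set.Ioi (1:ℝ),
                (volume.restrict (ball (0:EuclideanSpace ℝ (Fin n)) 1)) {a | t ≤ ‖a‖ ^ (-q)})
                ≤ ∫⁻ t in Set.Ioi (1:ℝ),
                    ENNReal.ofReal (t ^ (-((n:ℝ)/q)))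
                      * volume (closedBall (0:EuclideanSpace ℝ (Fin n)) 1) := by
                  refine setLIntegral_mono' measurableSet_Ioi fun t ht => ?_
                  rw [mem_Ioi] at ht
                  have ht0 : (0:ℝ) < t := lt_trans one_pos ht
                  refine le_trans (le_trans (Measure.restrict_apply_le _ _)
                    (measure_mono (hsub t ht0))) ?_
                  rw [Measure.addHaar_closedBall' _ _ (Real.rpow_nonneg ht0.le _)]
                  have : (t ^ (-q)⁻¹) ^ (Module.finrank ℝ (EuclideanSpace ℝ (Fin n)))
                      = t ^ (-((n:ℝ)/q)) := by
                    rw [← Real.rpow_natCast (t ^ (-q)⁻¹) _, ← Real.rpow_mul ht0.le,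
                      finrank_euclideanSpace, Fintype.card_fin]
                    congr 1
                    rw [div_eq_mul_inv, inv_neg, neg_mul, mul_comm]
                  rw [this]
              _ < ⊤ := by
                  rw [lintegral_mul_const' _ _ measure_closedBall_lt_top.ne]
                  refine ENNReal.mul_lt_top ?_ measure_closedBall_lt_top
                  refine IntegrableOn.setLIntegral_lt_top ?_
                  refine integrableOn_Ioi_rpow_of_lt ?_ one_pos
                  rw [neg_lt_neg_iff, lt_div_iff₀ hq0, one_mul]
                  exact hq

private lemma finite_J (hn : 1 ≤ n) {p : ℝ} (hnp : (n:ℝ) < p) (hp2 : p < (n:ℝ) + 2) :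
    (∫⁻ z : EuclideanSpace ℝ (Fin n),
      ENNReal.ofReal ((min 1 ‖z‖) ^ 2 / ‖z‖ ^ p)) < ⊤ := by
  have hp0 : (0:ℝ) < p := lt_of_le_of_lt (by positivity) hnp
  rw [← lintegral_add_compl (μ := volume)
    (fun z : EuclideanSpace ℝ (Fin n) => ENNReal.ofReal ((min 1 ‖z‖) ^ 2 / ‖z‖ ^ p))
    (measurableSet_ball (x := (0:EuclideanSpace ℝ (Fin n))) (ε := 1))]
  refine ENNReal.add_lt_top.2 ⟨?_, ?_⟩
  · calc (∫⁻ z : EuclideanSpace ℝ (Fin n) in ball 0 1,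
        ENNReal.ofReal ((min 1 ‖z‖) ^ 2 / ‖z‖ ^ p))
        ≤ ∫⁻ z : EuclideanSpace ℝ (Fin n) in ball 0 1, ENNReal.ofReal (‖z‖ ^ (-(p - 2))) := by
          refine setLIntegral_mono' measurableSet_ball fun z hz => ?_
          rw [mem_ball_zero_iff] at hz
          rw [min_eq_right hz.le]
          rcases eq_or_ne z 0 with rfl | hz0
          · simp
          · have hpos : (0:ℝ) < ‖z‖ := norm_pos_iff.2 hz0
            refine ENNReal.ofReal_le_ofReal (le_of_eq ?_)
            rw [neg_sub, ← Real.rpow_natCast ‖z‖ 2, ← Real.rpow_sub hpos]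
            norm_num
      _ < ⊤ := finite_ball_rpow hn (by linarith)
  · calc (∫⁻ z : EuclideanSpace ℝ (Fin n) in (ball 0 1)ᶜ,
        ENNReal.ofReal ((min 1 ‖z‖) ^ 2 / ‖z‖ ^ p))
        ≤ ∫⁻ z : EuclideanSpace ℝ (Fin n) in (ball 0 1)ᶜ,
            ENNReal.ofReal (2 ^ p * (1 + ‖z‖) ^ (-p)) := by
          refine setLIntegral_mono' measurableSet_ball.compl fun z hz => ?_
          rw [mem_compl_iff, mem_ball_zero_iff, not_lt] at hz
          have hz0 : (0:ℝ) < ‖z‖ := lt_of_lt_of_le one_pos hz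
          rw [min_eq_left hz]
          refine ENNReal.ofReal_le_ofReal ?_
          have h2 : (1 + ‖z‖) ^ p ≤ 2 ^ p * ‖z‖ ^ p := by
            rw [← Real.mul_rpow (by norm_num) (norm_nonneg z)]
            exact Real.rpow_le_rpow (by positivity) (by linarith) hp0.le
          rw [Real.rpow_neg (by positivity), one_pow, one_div]
          calc (‖z‖ ^ p)⁻¹ = 2 ^ p * (2 ^ p * ‖z‖ ^ p)⁻¹ := by
                rw [mul_inv, ← mul_assoc,
                  mul_inv_cancel₀ (ne_of_gt (Real.rpow_pos_of_pos two_pos p)), one_mul]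
            _ ≤ 2 ^ p * ((1 + ‖z‖) ^ p)⁻¹ := by
                have := inv_anti₀ (by positivity : (0:ℝ) < (1 + ‖z‖) ^ p) h2
                exact mul_le_mul_of_nonneg_left this (by positivity)
      _ ≤ ∫⁻ z : EuclideanSpace ℝ (Fin n),
            ENNReal.ofReal (2 ^ p * (1 + ‖z‖) ^ (-p)) := setLIntegral_le_lintegral _ _
      _ = ENNReal.ofReal (2 ^ p) * ∫⁻ z : EuclideanSpace ℝ (Fin n),
            ENNReal.ofReal ((1 + ‖z‖) ^ (-p)) := by
          simp_rw [ENNReal.ofReal_mul (le_of_lt (Real.rpow_pos_of_pos two_pos p))]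
          exact lintegral_const_mul' _ _ ENNReal.ofReal_ne_top
      _ < ⊤ := by
          refine ENNReal.mul_lt_top ENNReal.ofReal_lt_top ?_
          refine finite_integral_one_add_norm ?_
          rw [finrank_euclideanSpace, Fintype.card_fin]
          exact hnp

end KernelCutoffAux

open Metric Set in
set_option maxHeartbeats 1000000 in
/-- **Kernel cutoff estimate.** -/
theorem kernel_cutoff_estimate (n : ℕ) (hn : 1 ≤ n) (s K : ℝ)
    (hs : s ∈ Set.Ioo (0 : ℝ) 1) (hK : 0 < K) :
    ∃ C : ℝ, 0 < C ∧
      ∀ (η u : EuclideanSpace ℝ (Fin n) → ℝ),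
        ContDiff ℝ (⊤ : ℕ∞) η → HasCompactSupport η →
        tsupport η ⊆ Metric.ball (0 : EuclideanSpace ℝ (Fin n)) 1 →
        (∀ x, |η x| ≤ K) → (∀ x, ‖fderiv ℝ η x‖ ≤ K) → Measurable u →
        (∫⁻ p in {p : EuclideanSpace ℝ (Fin n) × EuclideanSpace ℝ (Fin n) |
            p.1 ∈ Metric.ball (0 : EuclideanSpace ℝ (Fin n)) 1 ∨
            p.2 ∈ Metric.ball (0 : EuclideanSpace ℝ (Fin n)) 1},
          ENNReal.ofReal (|u p.2| ^ 2 * |η p.1 - η p.2| ^ 2 / ‖p.1 - p.2‖ ^ ((n : ℝ) + 2 * s)))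
          ≤ ENNReal.ofReal C *
            ∫⁻ y : EuclideanSpace ℝ (Fin n),
              ENNReal.ofReal (|u y| ^ 2 / (1 + ‖y‖ ^ ((n : ℝ) + 2 * s))) := by
  obtain ⟨hs0, hs1⟩ := hs
  have hn1 : (1:ℝ) ≤ (n:ℝ) := by exact_mod_cast hn
  set p : ℝ := (n:ℝ) + 2 * s with hpdef
  have hnp : (n:ℝ) < p := by rw [hpdef]; linarith
  have hp2 : p < (n:ℝ) + 2 := by rw [hpdef]; linarith
  have hp0 : (0:ℝ) < p := by linarith
  have hJfin : (∫⁻ z : EuclideanSpace ℝ (Fin n),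
      ENNReal.ofReal ((min 1 ‖z‖) ^ 2 / ‖z‖ ^ p)) < ⊤ := finite_J hn hnp hp2
  set Jr : ℝ := (∫⁻ z : EuclideanSpace ℝ (Fin n),
      ENNReal.ofReal ((min 1 ‖z‖) ^ 2 / ‖z‖ ^ p)).toReal with hJr
  have hJr0 : (0:ℝ) ≤ Jr := ENNReal.toReal_nonneg
  set volB : ℝ := (volume (ball (0 : EuclideanSpace ℝ (Fin n)) 1)).toReal with hvolB
  have hvolB0 : (0:ℝ) < volB := by
    rw [hvolB]
    exact ENNReal.toReal_pos (ne_of_gt (measure_ball_pos _ _ one_pos))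
      measure_ball_lt_top.ne
  set A : ℝ := 4 * K ^ 2 * Jr * (1 + 3 ^ p) with hA
  set B : ℝ := 2 * (K ^ 2 * 2 ^ p * volB) with hB
  have h3p : (0:ℝ) < (3:ℝ) ^ p := Real.rpow_pos_of_pos (by norm_num) p
  have h2p : (0:ℝ) < (2:ℝ) ^ p := Real.rpow_pos_of_pos (by norm_num) p
  have hA0 : (0:ℝ) ≤ A := by rw [hA]; positivity
  have hB0 : (0:ℝ) < B := by rw [hB]; positivity
  refine ⟨A + B, by linarith, ?_⟩
  intro η u hηsm hηcs hηsupp hηK hηK' hu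
  -- Lipschitz estimate from the derivative bound
  have hlip : ∀ x y : EuclideanSpace ℝ (Fin n), |η x - η y| ≤ K * ‖x - y‖ := by
    intro x y
    have := Convex.norm_image_sub_le_of_norm_fderiv_le (f := η)
      (s := (Set.univ : Set (EuclideanSpace ℝ (Fin n))))
      (fun z _ => (hηsm.differentiable (by simp)).differentiableAt)
      (fun z _ => hηK' z) convex_univ (Set.mem_univ y) (Set.mem_univ x)
    simpa using this
  have hbd : ∀ x y : EuclideanSpace ℝ (Fin n),
      |η x - η y| ^ 2 / ‖x - y‖ ^ p
        ≤ 4 * K ^ 2 * ((min 1 ‖x - y‖) ^ 2 / ‖x - y‖ ^ p) := by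
    intro x y
    have h1 : |η x - η y| ≤ 2 * K * min 1 ‖x - y‖ := by
      rw [mul_min_of_nonneg _ _ (by positivity : (0:ℝ) ≤ 2 * K)]
      refine le_min ?_ ?_
      · have hx := abs_le.1 (hηK x)
        have hy := abs_le.1 (hηK y)
        rw [mul_one]
        exact abs_le.2 ⟨by linarith, by linarith⟩
      · calc |η x - η y| ≤ K * ‖x - y‖ := hlip x y
          _ ≤ 2 * K * ‖x - y‖ := by nlinarith [norm_nonneg (x - y), hK.le]
    have h2 : |η x - η y| ^ 2 ≤ 4 * K ^ 2 * (min 1 ‖x - y‖) ^ 2 := by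
      nlinarith [abs_nonneg (η x - η y),
        le_min (by norm_num : (0:ℝ) ≤ 1) (norm_nonneg (x - y))]
    rw [← mul_div_assoc]
    rcases (Real.rpow_nonneg (norm_nonneg (x - y)) p).eq_or_lt with hd | hd
    · rw [← hd, div_zero, div_zero]
    · exact (div_le_div_iff_of_pos_right hd).2 h2
  classical
  set Bl := ball (0 : EuclideanSpace ℝ (Fin n)) 1 with hBl
  set S := {q : EuclideanSpace ℝ (Fin n) × EuclideanSpace ℝ (Fin n) |
    q.1 ∈ Bl ∨ q.2 ∈ Bl} with hSdef
  have hS : MeasurableSet S := by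
    have : S = (Prod.fst ⁻¹' Bl) ∪ (Prod.snd ⁻¹' Bl) := by
      ext q; simp [hSdef]
    rw [this]
    exact (measurable_fst measurableSet_ball).union (measurable_snd measurableSet_ball)
  set F : EuclideanSpace ℝ (Fin n) × EuclideanSpace ℝ (Fin n) → ℝ≥0∞ := fun q =>
    ENNReal.ofReal (|u q.2| ^ 2 * |η q.1 - η q.2| ^ 2 / ‖q.1 - q.2‖ ^ p) with hFdef
  have hηm : Measurable η := hηsm.continuous.measurable
  have hF : Measurable F := by
    apply Measurable.ennreal_ofReal
    apply Measurable.div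
    · exact (((hu.comp measurable_snd).abs.pow_const 2)).mul
        ((((hηm.comp measurable_fst).sub (hηm.comp measurable_snd)).abs).pow_const 2)
    · fun_prop
  have hEq : (∫⁻ q in S, F q) = ∫⁻ y, ∫⁻ x, S.indicator F (x, y) := by
    rw [← lintegral_indicator hS, Measure.volume_eq_prod]
    exact lintegral_prod_symm _ ((hF.indicator hS).aemeasurable)
  have key : ∀ y : EuclideanSpace ℝ (Fin n), (∫⁻ x, S.indicator F (x, y)) ≤
      ENNReal.ofReal (|u y| ^ 2) * ENNReal.ofReal ((A + B) / (1 + ‖y‖ ^ p)) := by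
    intro y
    have hyp0 : (0:ℝ) < 1 + ‖y‖ ^ p := by positivity
    set T := {x : EuclideanSpace ℝ (Fin n) | x ∈ Bl ∨ y ∈ Bl} with hTdef
    set G : EuclideanSpace ℝ (Fin n) → ℝ≥0∞ := fun x =>
      ENNReal.ofReal (|η x - η y| ^ 2 / ‖x - y‖ ^ p) with hGdef
    have hind : ∀ x, S.indicator F (x, y)
        = ENNReal.ofReal (|u y| ^ 2) * T.indicator G x := by
      intro x
      by_cases hx : x ∈ T
      · rw [Set.indicator_of_mem hx, Set.indicator_of_mem (show (x, y) ∈ S from hx),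
          hFdef, hGdef]
        simp only
        rw [← ENNReal.ofReal_mul (by positivity), mul_div_assoc]
      · rw [Set.indicator_of_notMem hx,
          Set.indicator_of_notMem (show (x, y) ∉ S from hx), mul_zero]
    simp_rw [hind]
    rw [lintegral_const_mul' _ _ ENNReal.ofReal_ne_top]
    refine mul_le_mul_right ?_ _
    rcases le_or_gt ‖y‖ 2 with hy | hy
    · -- case ‖y‖ ≤ 2 : drop the indicator, translate
      have step1 : (∫⁻ x, T.indicator G x)
          ≤ ∫⁻ x, ENNReal.ofReal (4 * K ^ 2 * ((min 1 ‖x - y‖) ^ 2 / ‖x - y‖ ^ p)) := by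
        refine lintegral_mono fun x => ?_
        refine le_trans (Set.indicator_le_self _ _ x) ?_
        exact ENNReal.ofReal_le_ofReal (hbd x y)
      have step2 : (∫⁻ x, ENNReal.ofReal (4 * K ^ 2 * ((min 1 ‖x - y‖) ^ 2 / ‖x - y‖ ^ p)))
          = ENNReal.ofReal (4 * K ^ 2)
              * ∫⁻ x, ENNReal.ofReal ((min 1 ‖x - y‖) ^ 2 / ‖x - y‖ ^ p) := by
        simp_rw [ENNReal.ofReal_mul (by positivity : (0:ℝ) ≤ 4 * K ^ 2)]
        exact lintegral_const_mul' _ _ ENNReal.ofReal_ne_top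
      have step3 : (∫⁻ x, ENNReal.ofReal ((min 1 ‖x - y‖) ^ 2 / ‖x - y‖ ^ p))
          = ∫⁻ z : EuclideanSpace ℝ (Fin n), ENNReal.ofReal ((min 1 ‖z‖) ^ 2 / ‖z‖ ^ p) :=
        lintegral_sub_right_eq_self (μ := volume)
          (f := fun z => ENNReal.ofReal ((min 1 ‖z‖) ^ 2 / ‖z‖ ^ p)) y
      have step4 : ENNReal.ofReal (4 * K ^ 2)
          * (∫⁻ z : EuclideanSpace ℝ (Fin n), ENNReal.ofReal ((min 1 ‖z‖) ^ 2 / ‖z‖ ^ p))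
          ≤ ENNReal.ofReal ((A + B) / (1 + ‖y‖ ^ p)) := by
        rw [← ENNReal.ofReal_toReal hJfin.ne, ← hJr,
          ← ENNReal.ofReal_mul (by positivity)]
        refine ENNReal.ofReal_le_ofReal ?_
        rw [le_div_iff₀ hyp0]
        have hyP : ‖y‖ ^ p ≤ 3 ^ p :=
          Real.rpow_le_rpow (norm_nonneg _) (by linarith) hp0.le
        have hKJ : (0:ℝ) ≤ 4 * K ^ 2 * Jr := by positivity
        calc 4 * K ^ 2 * Jr * (1 + ‖y‖ ^ p)
            ≤ 4 * K ^ 2 * Jr * (1 + 3 ^ p) := by nlinarith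
          _ = A := hA.symm
          _ ≤ A + B := by linarith
      exact step1.trans (le_of_le_of_eq (le_of_eq (step2.trans (by rw [step3]))) rfl |>.trans step4)
    · -- case ‖y‖ > 2
      have hynot : y ∉ Bl := by
        rw [hBl, mem_ball_zero_iff]; intro h; linarith
      have hηy : η y = 0 := by
        apply image_eq_zero_of_notMem_tsupport
        intro hmem
        exact hynot (hηsupp hmem)
      have hTeq : T = Bl := by
        ext x; simp [hTdef, hynot]
      rw [hTeq]
      have hpt : ∀ x ∈ Bl, |η x - η y| ^ 2 / ‖x - y‖ ^ p ≤ K ^ 2 * 2 ^ p / ‖y‖ ^ p := by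
        intro x hx
        have hx1 : ‖x‖ < 1 := mem_ball_zero_iff.1 hx
        have hy0 : (0:ℝ) < ‖y‖ := by linarith
        have hxy : ‖y‖ / 2 ≤ ‖x - y‖ := by
          calc ‖y‖ / 2 ≤ ‖y‖ - ‖x‖ := by linarith
            _ ≤ ‖y - x‖ := norm_sub_norm_le y x
            _ = ‖x - y‖ := norm_sub_rev y x
        have hd : ‖y‖ ^ p / 2 ^ p ≤ ‖x - y‖ ^ p := by
          rw [← Real.div_rpow (norm_nonneg y) (by norm_num : (0:ℝ) ≤ 2)]
          exact Real.rpow_le_rpow (by positivity) hxy hp0.le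
        have hnum : |η x - η y| ^ 2 ≤ K ^ 2 := by
          rw [hηy, sub_zero]
          nlinarith [hηK x, abs_nonneg (η x)]
        have hdpos : (0:ℝ) < ‖y‖ ^ p / 2 ^ p := by positivity
        calc |η x - η y| ^ 2 / ‖x - y‖ ^ p ≤ K ^ 2 / (‖y‖ ^ p / 2 ^ p) :=
              div_le_div₀ (by positivity) hnum hdpos hd
          _ = K ^ 2 * 2 ^ p / ‖y‖ ^ p := by rw [div_div_eq_mul_div]
      calc (∫⁻ x, Bl.indicator G x)
          ≤ ∫⁻ x, Bl.indicator
              (fun _ => ENNReal.ofReal (K ^ 2 * 2 ^ p / ‖y‖ ^ p)) x := by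
            refine lintegral_mono fun x => ?_
            by_cases hx : x ∈ Bl
            · rw [Set.indicator_of_mem hx, Set.indicator_of_mem hx, hGdef]
              exact ENNReal.ofReal_le_ofReal (hpt x hx)
            · rw [Set.indicator_of_notMem hx, Set.indicator_of_notMem hx]
        _ = ENNReal.ofReal (K ^ 2 * 2 ^ p / ‖y‖ ^ p) * volume Bl :=
            lintegral_indicator_const measurableSet_ball _
        _ ≤ ENNReal.ofReal ((A + B) / (1 + ‖y‖ ^ p)) := by
            have hvol : volume Bl = ENNReal.ofReal volB :=
              (ENNReal.ofReal_toReal measure_ball_lt_top.ne).symm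
            rw [hvol, ← ENNReal.ofReal_mul (by positivity)]
            refine ENNReal.ofReal_le_ofReal ?_
            have h1y : (1:ℝ) ≤ ‖y‖ ^ p := by
              have := Real.rpow_le_rpow (by norm_num : (0:ℝ) ≤ 1)
                (by linarith : (1:ℝ) ≤ ‖y‖) hp0.le
              rwa [Real.one_rpow] at this
            have hy0 : (0:ℝ) < ‖y‖ := by linarith
            rw [div_mul_eq_mul_div, div_le_div_iff₀ (by positivity) hyp0]
            have hKp : (0:ℝ) ≤ K ^ 2 * 2 ^ p * volB := by positivity
            nlinarith [mul_le_mul_of_nonneg_left h1y hKp,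
              mul_nonneg hA0 (Real.rpow_nonneg (norm_nonneg y) p)]
  calc (∫⁻ q in S, F q) = ∫⁻ y, ∫⁻ x, S.indicator F (x, y) := hEq
    _ ≤ ∫⁻ y, ENNReal.ofReal (|u y| ^ 2) * ENNReal.ofReal ((A + B) / (1 + ‖y‖ ^ p)) :=
        lintegral_mono key
    _ = ENNReal.ofReal (A + B)
          * ∫⁻ y, ENNReal.ofReal (|u y| ^ 2 / (1 + ‖y‖ ^ p)) := by
        rw [← lintegral_const_mul' _ _ ENNReal.ofReal_ne_top]
        refine lintegral_congr fun y => ?_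
        have hyp0 : (0:ℝ) < 1 + ‖y‖ ^ p := by positivity
        rw [← ENNReal.ofReal_mul (by positivity), ← ENNReal.ofReal_mul (by linarith)]
        congr 1
        field_simp

end
end
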